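/- Let q be a real number with 0<q<1, let f be a positive integer, let χ be a Dirichlet character modulo f with values in ℂ, let x>0 and w₁>0 be real, and let s∈ℂ with Re(s)>0. Then the function t ↦ t^{s-1}·Σ_{m=1}^∞ χ(m)·q^{w₁m}·exp(-[x+w₁m]_q·t) is integrable on (0,∞) and ∫_0^∞ t^{s-1}·( Σ_{m=1}^∞ χ(m)·q^{w₁m}·exp(-[x+w₁m]_q·t) ) dt = Γ(s)·Σ_{m=1}^∞ χ(m)·q^{w₁m}·[x+w₁m]_q^{-s}. (The Mellin-transform representation of the two-variable Dirichlet q-L-function, obtained by interchanging summation and integration.) -/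

import Mathlib

/-!
Each term `χ(m) q^{w₁m} e^{-[x+w₁m]_q t}` has Mellin transform `Γ(s) χ(m) q^{w₁m} [x+w₁m]_q^{-s}`
by the Gamma integral. Since `q^{w₁m}` is geometric and the exponents `[x+w₁m]_q` are bounded
below by `[x]_q > 0`, the integrals of the absolute values of the terms are summable; hence the
series of integrands converges in `L¹(0, ∞)` and summation and integration can be interchanged.
-/

open Complex MeasureTheory

noncomputable def qNum (q y : ℝ) : ℝ := (1 - q ^ y) / (1 - q)

open Set

namespace MeasureTheory

variable {α E ι : Type*} [MeasurableSpace α] {μ : Measure α} [NormedAddCommGroup E]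
  [CompleteSpace E] [Countable ι]

theorem integrable_tsum_of_summable_integral_norm {F : ι → α → E}
    (hF_int : ∀ i, Integrable (F i) μ) (hF_sum : Summable fun i ↦ ∫ a, ‖F i a‖ ∂μ) :
    Integrable (fun a ↦ ∑' i, F i a) μ := by
  -- The series converges in `L¹`, and its `L¹` sum agrees a.e. with the pointwise sum.
  let g : ι → α →₁[μ] E := fun i ↦ (hF_int i).toL1 (F i)
  have hgF : ∀ᵐ a ∂μ, ∀ i, g i a = F i a := ae_all_iff.2 fun i ↦ (hF_int i).coeFn_toL1
  have hg_norm (i : ι) : ‖g i‖ = ∫ a, ‖F i a‖ ∂μ := by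
    rw [L1.norm_eq_integral_norm]
    exact integral_congr_ae <| by
      filter_upwards [(hF_int i).coeFn_toL1] with a ha
      rw [ha]
  have hg : ∑' i, ‖g i‖ₑ ≠ ⊤ :=
    tsum_enorm_ne_top_iff_summable_norm.2 (by simpa only [hg_norm] using hF_sum)
  refine (L1.integrable_coeFn (∑' i, g i)).congr ?_
  filter_upwards [Lp.coeFn_tsum hg, hgF] with a hsum hga
  rw [hsum]
  exact tsum_congr hga

end MeasureTheory

section Mellin

variable {ι : Type*} [Countable ι] {s : ℂ}

theorem mellinConvergent_exp_neg_mul (hs : 0 < s.re) {p : ℝ} (hp : 0 < p) :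
    MellinConvergent (fun t : ℝ ↦ (Real.exp (-p * t) : ℂ)) s := by
  simp_rw [neg_mul]
  refine (MellinConvergent.comp_mul_left (f := fun t : ℝ ↦ (Real.exp (-t) : ℂ)) hp).2 ?_
  exact (GammaIntegral_convergent hs).congr_fun (fun t _ ↦ by simp [mul_comm]) measurableSet_Ioi

theorem integral_norm_cpow_mul_exp_neg_mul (hs : 0 < s.re) {p : ℝ} (hp : 0 < p) :
    ∫ t in Ioi (0 : ℝ), ‖(t : ℂ) ^ (s - 1) * Real.exp (-p * t)‖ = Real.Gamma s.re / p ^ s.re := by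
  have h_real := Real.integral_rpow_mul_exp_neg_mul_Ioi hs hp
  rw [one_div, Real.inv_rpow hp.le, ← div_eq_inv_mul] at h_real
  rw [← h_real]
  refine setIntegral_congr_fun measurableSet_Ioi fun t ht ↦ ?_
  rw [norm_mul, norm_real, Real.norm_eq_abs, Real.abs_exp, norm_cpow_eq_rpow_re_of_pos ht, sub_re,
    one_re, neg_mul]

theorem mellinConvergent_tsum_mul_exp_neg_mul {a : ι → ℂ} {p : ι → ℝ} (hp : ∀ i, 0 < p i)
    (hs : 0 < s.re) (h_sum : Summable fun i ↦ ‖a i‖ / p i ^ s.re) :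
    MellinConvergent (fun t : ℝ ↦ ∑' i, a i * Real.exp (-p i * t)) s := by
  have h_int (i : ι) : MellinConvergent (fun t : ℝ ↦ a i * Real.exp (-p i * t)) s :=
    (mellinConvergent_exp_neg_mul hs (hp i)).const_smul (a i)
  have h_norm (i : ι) : ∫ t in Ioi (0 : ℝ), ‖(t : ℂ) ^ (s - 1) • (a i * Real.exp (-p i * t))‖ =
      Real.Gamma s.re * (‖a i‖ / p i ^ s.re) := by
    simp_rw [smul_eq_mul, mul_left_comm _ (a i), norm_mul (a i), integral_const_mul,
      integral_norm_cpow_mul_exp_neg_mul hs (hp i)]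
    ring
  have h_tsum := integrable_tsum_of_summable_integral_norm (fun i ↦ h_int i)
    (by simpa only [h_norm] using h_sum.mul_left (Real.Gamma s.re))
  simpa only [MellinConvergent, IntegrableOn, smul_eq_mul, tsum_mul_left] using h_tsum

theorem hasMellin_tsum_mul_exp_neg_mul {a : ι → ℂ} {p : ι → ℝ} {c : ℝ} (hc : 0 < c)
    (hp : ∀ i, c ≤ p i) (ha : Summable fun i ↦ ‖a i‖) (hs : 0 < s.re) :
    HasMellin (fun t : ℝ ↦ ∑' i, a i * cexp (-(p i : ℂ) * t)) s
      (Gamma s * ∑' i, a i * (p i : ℂ) ^ (-s)) := by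
  have hp_pos (i : ι) : 0 < p i := hc.trans_le (hp i)
  have h_sum : Summable fun i ↦ ‖a i‖ / p i ^ s.re :=
    (ha.div_const (c ^ s.re)).of_nonneg_of_le
      (fun i ↦ div_nonneg (norm_nonneg _) (Real.rpow_nonneg (hp_pos i).le _)) fun i ↦
      div_le_div_of_nonneg_left (norm_nonneg _) (Real.rpow_pos_of_pos hc _)
        (Real.rpow_le_rpow hc.le (hp i) hs.le)
  have hF (t : ℝ) (ht : t ∈ Ioi 0) :
      HasSum (fun i ↦ a i * Real.exp (-p i * t)) (∑' i, a i * Real.exp (-p i * t)) := by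
    refine (ha.of_norm_bounded fun i ↦ ?_).hasSum
    rw [norm_mul, norm_real, Real.norm_eq_abs, Real.abs_exp]
    exact mul_le_of_le_one_right (norm_nonneg _) <|
      Real.exp_le_one_iff.2 (by nlinarith [hp_pos i, mem_Ioi.1 ht])
  have h_cast (t : ℝ) (i : ι) : cexp (-(p i : ℂ) * t) = (Real.exp (-p i * t) : ℂ) := by
    push_cast; rfl
  simp_rw [h_cast]
  refine ⟨mellinConvergent_tsum_mul_exp_neg_mul hp_pos hs h_sum, ?_⟩
  rw [← (hasSum_mellin (fun i ↦ Or.inr (hp_pos i)) hs hF h_sum).tsum_eq, ← tsum_mul_left]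
  simp_rw [cpow_neg, mul_div_assoc, div_eq_mul_inv]

end Mellin

theorem qNum_pos {q y : ℝ} (hq0 : 0 < q) (hq1 : q < 1) (hy : 0 < y) : 0 < qNum q y :=
  div_pos (sub_pos.2 (Real.rpow_lt_one hq0.le hq1 hy)) (sub_pos.2 hq1)

theorem qNum_le_qNum {q y z : ℝ} (hq0 : 0 < q) (hq1 : q < 1) (hyz : y ≤ z) :
    qNum q y ≤ qNum q z :=
  div_le_div_of_nonneg_right
    (sub_le_sub_left (Real.rpow_le_rpow_of_exponent_ge hq0 hq1.le hyz) 1) (sub_pos.2 hq1).le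

theorem summable_rpow_mul_add_one {q w : ℝ} (hq0 : 0 < q) (hq1 : q < 1) (hw : 0 < w) :
    Summable fun m : ℕ ↦ q ^ (w * ((m : ℝ) + 1)) := by
  have hr : q ^ w < 1 := Real.rpow_lt_one hq0.le hq1 hw
  refine ((summable_geometric_of_lt_one (by positivity) hr).mul_left (q ^ w)).congr fun m ↦ ?_
  rw [← pow_succ', ← Real.rpow_natCast, ← Real.rpow_mul hq0.le]
  push_cast; rfl

theorem stmt6_general (q : ℝ) (hq0 : 0 < q) (hq1 : q < 1) (f : ℕ)
    (χ : DirichletCharacter ℂ f) (x w₁ : ℝ) (hx : 0 < x) (hw₁ : 0 < w₁)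
    (s : ℂ) (hs : 0 < s.re) :
    IntegrableOn (fun t : ℝ => ((t : ℂ) ^ (s - 1)) *
        ∑' m : ℕ, χ ((m + 1 : ℕ) : ZMod f) * ((q ^ (w₁ * ((m : ℝ) + 1)) : ℝ) : ℂ) *
          Complex.exp (-((qNum q (x + w₁ * ((m : ℝ) + 1)) : ℝ) : ℂ) * (t : ℂ)))
      (Set.Ioi 0) ∧
    ∫ t in Set.Ioi (0 : ℝ), ((t : ℂ) ^ (s - 1)) *
        ∑' m : ℕ, χ ((m + 1 : ℕ) : ZMod f) * ((q ^ (w₁ * ((m : ℝ) + 1)) : ℝ) : ℂ) *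
          Complex.exp (-((qNum q (x + w₁ * ((m : ℝ) + 1)) : ℝ) : ℂ) * (t : ℂ))
      = Complex.Gamma s *
        ∑' m : ℕ, χ ((m + 1 : ℕ) : ZMod f) * ((q ^ (w₁ * ((m : ℝ) + 1)) : ℝ) : ℂ) *
          ((qNum q (x + w₁ * ((m : ℝ) + 1)) : ℝ) : ℂ) ^ (-s) := by
  have h_coeff : Summable fun m : ℕ ↦
      ‖χ ((m + 1 : ℕ) : ZMod f) * ((q ^ (w₁ * ((m : ℝ) + 1)) : ℝ) : ℂ)‖ :=
    (summable_rpow_mul_add_one hq0 hq1 hw₁).of_nonneg_of_le (fun _ ↦ norm_nonneg _) fun m ↦ by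
      rw [norm_mul, norm_real, Real.norm_of_nonneg (by positivity)]
      exact mul_le_of_le_one_left (by positivity) (χ.norm_le_one _)
  have h_exp (m : ℕ) : qNum q x ≤ qNum q (x + w₁ * ((m : ℝ) + 1)) :=
    qNum_le_qNum hq0 hq1 (le_add_of_nonneg_right (by positivity))
  exact hasMellin_tsum_mul_exp_neg_mul (qNum_pos hq0 hq1 hx) h_exp h_coeff hs

/-- The Mellin-transform representation of the two-variable Dirichlet `q`-`L`-function:
`∫_0^∞ t^{s-1}·(Σ_{m≥1} χ(m)·q^{w₁m}·e^{-[x+w₁m]_q·t}) dt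
  = Γ(s)·Σ_{m≥1} χ(m)·q^{w₁m}·[x+w₁m]_q^{-s}` for `Re(s) > 0`. -/
theorem stmt6 (q : ℝ) (hq0 : 0 < q) (hq1 : q < 1) (f : ℕ) (hf : 0 < f)
    (χ : DirichletCharacter ℂ f) (x w₁ : ℝ) (hx : 0 < x) (hw₁ : 0 < w₁)
    (s : ℂ) (hs : 0 < s.re) :
    IntegrableOn (fun t : ℝ => ((t : ℂ) ^ (s - 1)) *
        ∑' m : ℕ, χ ((m + 1 : ℕ) : ZMod f) * ((q ^ (w₁ * ((m : ℝ) + 1)) : ℝ) : ℂ) *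
          Complex.exp (-((qNum q (x + w₁ * ((m : ℝ) + 1)) : ℝ) : ℂ) * (t : ℂ)))
      (Set.Ioi 0) ∧
    ∫ t in Set.Ioi (0 : ℝ), ((t : ℂ) ^ (s - 1)) *
        ∑' m : ℕ, χ ((m + 1 : ℕ) : ZMod f) * ((q ^ (w₁ * ((m : ℝ) + 1)) : ℝ) : ℂ) *
          Complex.exp (-((qNum q (x + w₁ * ((m : ℝ) + 1)) : ℝ) : ℂ) * (t : ℂ))
      = Complex.Gamma s *
        ∑' m : ℕ, χ ((m + 1 : ℕ) : ZMod f) * ((q ^ (w₁ * ((m : ℝ) + 1)) : ℝ) : ℂ) *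
          ((qNum q (x + w₁ * ((m : ℝ) + 1)) : ℝ) : ℂ) ^ (-s) :=
  stmt6_general q hq0 hq1 f χ x w₁ hx hw₁ s hs
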